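/- arXiv:1803.08423 — 3 statements merged into one kernel-verified Lean document; each statement's English description precedes it below -/
import Mathlib

section
/- Let G be a finite d-regular graph with a legal edge coloring c₁, let γ be a bi-chromatic cycle of (G,c₁) of type i,j, and let p : Ḡ → G be a finite graph covering. Write p⁻¹(γ) as the disjoint union of the bi-chromatic cycles γ₁,…,γₘ of (Ḡ, c₁∘p). Then performing the edge Kempe switches along γ₁,…,γₘ successively transforms the coloring c₁∘p into the coloring (γc₁)∘p; that is, γ₁(γ₂(⋯γₘ(c₁∘p))) = (γc₁)∘p. -/
/-- A graph is `d`-regular: every vertex has exactly `d` neighbors. -/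
def RegularDeg {V : Type} (G : SimpleGraph V) (d : ℕ) : Prop :=
  ∀ v : V, (G.neighborSet v).ncard = d

/-- A legal edge coloring of `G` with colors `{1, …, d}`: every edge receives a color in
`{1, …, d}` and any two distinct edges sharing a vertex receive distinct colors. -/
def IsLegal {V : Type} (G : SimpleGraph V) (d : ℕ) (c : Sym2 V → ℕ) : Prop :=
  (∀ e ∈ G.edgeSet, c e ∈ Finset.Icc 1 d) ∧
    ∀ ⦃u v w : V⦄, G.Adj u v → G.Adj u w → v ≠ w → c s(u, v) ≠ c s(u, w)

/-- The set of edges of `G` colored `i` by `c`; the edge set of the spanning subgraph `(G,c)[i]`. -/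
def colorEdges {V : Type} (G : SimpleGraph V) (c : Sym2 V → ℕ) (i : ℕ) : Set (Sym2 V) :=
  {e | e ∈ G.edgeSet ∧ c e = i}

/-- The spanning subgraph `(G,c)[i,j]` of all edges colored `i` or `j`. -/
def biSub {V : Type} (G : SimpleGraph V) (c : Sym2 V → ℕ) (i j : ℕ) : SimpleGraph V :=
  SimpleGraph.fromEdgeSet (colorEdges G c i ∪ colorEdges G c j)

/-- `γ` is a bi-chromatic cycle of `(G,c)` of type `i,j`: `i ≠ j` and `γ` is the (nonempty)
edge set of a connected component of the spanning subgraph `(G,c)[i,j]`. -/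
def IsBichromaticCycle {V : Type} (G : SimpleGraph V) (c : Sym2 V → ℕ) (i j : ℕ)
    (γ : Set (Sym2 V)) : Prop :=
  i ≠ j ∧ γ.Nonempty ∧
    ∃ K : (biSub G c i j).ConnectedComponent,
      γ = {e | e ∈ (biSub G c i j).edgeSet ∧
        ∀ v ∈ e, (biSub G c i j).connectedComponentMk v = K}

open scoped Classical in
/-- The edge Kempe switch: swap colors `i` and `j` on the edges of `γ`, leaving other
edges unchanged. -/
noncomputable def kempeSwitch {V : Type} (i j : ℕ) (γ : Set (Sym2 V)) (c : Sym2 V → ℕ) :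
    Sym2 V → ℕ :=
  fun e => if e ∈ γ then (if c e = i then j else if c e = j then i else c e) else c e

/-- Two colorings agree on all edges of `G` (i.e. they are equal as edge colorings). -/
def EdgeEqOn {V : Type} (G : SimpleGraph V) (c c' : Sym2 V → ℕ) : Prop :=
  ∀ e ∈ G.edgeSet, c e = c' e

/-- Edge Kempe equivalence: `c'` is obtained from `c` by a finite sequence of edge
Kempe switches (colorings are regarded as functions on the edge set of `G`). -/
def KempeEquiv {V : Type} (G : SimpleGraph V) (c c' : Sym2 V → ℕ) : Prop :=
  Relation.ReflTransGen
    (fun a b => EdgeEqOn G a b ∨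
      ∃ i j γ, IsBichromaticCycle G a i j γ ∧ b = kempeSwitch i j γ a) c c'

/-- `p : V' → V` is a graph covering `G' → G`: it is surjective and induces a bijection
between the neighbors of `v'` (equivalently, the edges incident at `v'`) and the neighbors
of `p v'`, for every vertex `v'`. -/
def IsCovering {V' V : Type} (G' : SimpleGraph V') (G : SimpleGraph V) (p : V' → V) : Prop :=
  Function.Surjective p ∧ ∀ v' : V', Set.BijOn p (G'.neighborSet v') (G.neighborSet (p v'))

/-- The edge set of `G_s`: edges colored `d` by both `c₁` and `c₂`. -/
def sEdges {V : Type} (G : SimpleGraph V) (c₁ c₂ : Sym2 V → ℕ) (d : ℕ) : Set (Sym2 V) :=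
  colorEdges G c₁ d ∩ colorEdges G c₂ d

/-- The edge set of `G_r`: edges colored `d` by exactly one of `c₁`, `c₂`. -/
def rEdges {V : Type} (G : SimpleGraph V) (c₁ c₂ : Sym2 V → ℕ) (d : ℕ) : Set (Sym2 V) :=
  (colorEdges G c₁ d ∪ colorEdges G c₂ d) \ sEdges G c₁ c₂ d

theorem kempeSwitch_apply_congr_mem {V : Type} (i j : ℕ) {s t : Set (Sym2 V)}
    (c : Sym2 V → ℕ) {e : Sym2 V} (h : e ∈ s ↔ e ∈ t) :
    kempeSwitch i j s c e = kempeSwitch i j t c e := by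
  by_cases hs : e ∈ s
  · simp [kempeSwitch, hs, h.mp hs]
  · simp [kempeSwitch, hs, mt h.mpr hs]

theorem kempeSwitch_kempeSwitch_of_disjoint {V : Type} (i j : ℕ) {s t : Set (Sym2 V)}
    (hst : Disjoint s t) (c : Sym2 V → ℕ) :
    kempeSwitch i j s (kempeSwitch i j t c) = kempeSwitch i j (s ∪ t) c := by
  funext e
  by_cases hs : e ∈ s
  · have ht : e ∉ t := Set.disjoint_left.mp hst hs
    simp [kempeSwitch, hs, ht]
  · calc kempeSwitch i j s (kempeSwitch i j t c) e = kempeSwitch i j t c e := if_neg hs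
      _ = kempeSwitch i j (s ∪ t) c e := kempeSwitch_apply_congr_mem i j c (by simp [hs])

theorem foldr_kempeSwitch_of_pairwise_disjoint {V : Type} (i j : ℕ) (c : Sym2 V → ℕ)
    {L : List (Set (Sym2 V))} (hL : L.Pairwise Disjoint) :
    L.foldr (kempeSwitch i j) c = kempeSwitch i j (⋃ s ∈ L, s) c := by
  induction L with
  | nil => funext e; simp [kempeSwitch]
  | cons s L ih =>
    rw [List.pairwise_cons] at hL
    have hdisj : Disjoint s (⋃ t ∈ L, t) := Set.disjoint_iUnion₂_right.mpr hL.1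
    have hunion : (⋃ t ∈ s :: L, t) = s ∪ ⋃ t ∈ L, t := by ext; simp
    rw [List.foldr_cons, ih hL.2, kempeSwitch_kempeSwitch_of_disjoint i j hdisj, hunion]

theorem kempeSwitch_preimage_comp {V V' : Type} (i j : ℕ) (γ : Set (Sym2 V))
    (c : Sym2 V → ℕ) (f : Sym2 V' → Sym2 V) :
    kempeSwitch i j (f ⁻¹' γ) (c ∘ f) = kempeSwitch i j γ c ∘ f :=
  rfl

theorem statement_7_general {V V' : Type}
    (G' : SimpleGraph V') (c₁ : Sym2 V → ℕ) (p : V' → V)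
    (i j : ℕ)
    (γ : Set (Sym2 V))
    (L : List (Set (Sym2 V')))
    (hLdisj : L.Pairwise Disjoint)
    (hLunion : (⋃ γ' ∈ L, γ') = {e' | e' ∈ G'.edgeSet ∧ Sym2.map p e' ∈ γ}) :
    EdgeEqOn G' (L.foldr (kempeSwitch i j) (c₁ ∘ Sym2.map p))
      (kempeSwitch i j γ c₁ ∘ Sym2.map p) := by
  intro e he
  rw [foldr_kempeSwitch_of_pairwise_disjoint i j _ hLdisj, ← kempeSwitch_preimage_comp]
  apply kempeSwitch_apply_congr_mem
  rw [hLunion]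
  exact and_iff_right he

/-- If `p⁻¹(γ)` is the disjoint union of the bi-chromatic cycles `γ₁, …, γₘ` of
`(Ḡ, c₁∘p)`, then performing the Kempe switches along `γ₁, …, γₘ` successively transforms
`c₁∘p` into `(γ c₁)∘p` (as colorings of the edges of `Ḡ`). -/
theorem statement_7 {V V' : Type} [Fintype V] [Fintype V'] (G : SimpleGraph V)
    (G' : SimpleGraph V') (d : ℕ) (c₁ : Sym2 V → ℕ) (p : V' → V)
    (hreg : RegularDeg G d) (hc : IsLegal G d c₁) (hp : IsCovering G' G p)
    (i j : ℕ) (hi : i ∈ Finset.Icc 1 d) (hj : j ∈ Finset.Icc 1 d)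
    (γ : Set (Sym2 V)) (hγ : IsBichromaticCycle G c₁ i j γ)
    (L : List (Set (Sym2 V')))
    (hL : ∀ γ' ∈ L, IsBichromaticCycle G' (c₁ ∘ Sym2.map p) i j γ')
    (hLdisj : L.Pairwise Disjoint)
    (hLunion : (⋃ γ' ∈ L, γ') = {e' | e' ∈ G'.edgeSet ∧ Sym2.map p e' ∈ γ}) :
    EdgeEqOn G' (L.foldr (kempeSwitch i j) (c₁ ∘ Sym2.map p))
      (kempeSwitch i j γ c₁ ∘ Sym2.map p) :=
  statement_7_general G' c₁ p i j γ L hLdisj hLunion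
end

section
/- Let G be a finite graph, let H ⊆ G be a subgraph, and let p : H′ → H be a finite graph covering. Then there exist finite graph coverings q : H̄ → H′ and r : Ḡ → G such that H̄ is a subgraph of Ḡ and the restriction of r to H̄ equals p∘q. -/
/-!
Regard `p` as a locally injective homomorphism `φ : H' → G`. Take `|W|` sheets `V × W` over `G`
and join `(u, a)` to `(v, π_{uv} a)` for a permutation `π_{uv}` of `W` attached to the edge `uv`.
For `π_{uv}` use the involution exchanging each `a` in the fibre of `u` with its unique
`H'`-neighbour in the fibre of `v` (and fixing everything else): involutions need no orientation
of the edge, and by construction `a ↦ (φ a, a)` embeds `H'` into the cover.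
-/

namespace SimpleGraph

variable {V W X : Type}

section VoltageCover

variable (G : SimpleGraph V) (π : Sym2 V → W → W)

def voltageCover (hπ : ∀ e, Function.Involutive (π e)) : SimpleGraph (V × W) where
  Adj x y := G.Adj x.1 y.1 ∧ π s(x.1, y.1) x.2 = y.2
  symm := ⟨fun x y ⟨hxy, hπxy⟩ => ⟨hxy.symm, by rw [Sym2.eq_swap, ← hπxy, hπ]⟩⟩
  loopless := ⟨fun x h => G.loopless.irrefl x.1 h.1⟩

variable {G π}

theorem isCovering_voltageCover [Nonempty W] (hπ : ∀ e, Function.Involutive (π e)) :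
    IsCovering (G.voltageCover π hπ) G Prod.fst := by
  refine ⟨fun v => ⟨(v, Classical.arbitrary W), rfl⟩, fun ⟨u, a⟩ => ⟨?_, ?_, ?_⟩⟩
  · exact fun y hy => hy.1
  · rintro ⟨v, b⟩ ⟨-, hb⟩ ⟨v', b'⟩ ⟨-, hb'⟩ (rfl : v = v')
    exact Prod.ext rfl (hb.symm.trans hb')
  · exact fun v hv => ⟨(v, π s(u, v) a), ⟨hv, rfl⟩, rfl⟩

end VoltageCover

section FiberSwap

variable {G' : SimpleGraph W} {f : W → X}

open Classical in
noncomputable def fiberSwap (G' : SimpleGraph W) (f : W → X) (e : Sym2 X) (a : W) : W :=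
  if h : ∃ b, G'.Adj a b ∧ s(f a, f b) = e then h.choose else a

lemma fiberSwap_of_adj (hf : ∀ a, Set.InjOn f (G'.neighborSet a)) {a b : W} (h : G'.Adj a b) :
    fiberSwap G' f s(f a, f b) a = b := by
  have hex : ∃ b', G'.Adj a b' ∧ s(f a, f b') = s(f a, f b) := ⟨b, h, rfl⟩
  rw [fiberSwap, dif_pos hex]
  obtain ⟨hadj, he⟩ := hex.choose_spec
  exact hf a hadj h (Sym2.congr_right.mp he)

lemma fiberSwap_involutive (hf : ∀ a, Set.InjOn f (G'.neighborSet a)) (e : Sym2 X) :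
    Function.Involutive (fiberSwap G' f e) := by
  intro a
  by_cases hex : ∃ b, G'.Adj a b ∧ s(f a, f b) = e
  · obtain ⟨b, hab, rfl⟩ := hex
    rw [fiberSwap_of_adj hf hab, Sym2.eq_swap, fiberSwap_of_adj hf hab.symm]
  · have hfix : fiberSwap G' f e a = a := dif_neg hex
    rw [hfix, hfix]

end FiberSwap

section Lift

variable {G : SimpleGraph V} {G' : SimpleGraph W} (φ : G' →g G)
  (hφ : ∀ a, Set.InjOn φ (G'.neighborSet a))

noncomputable abbrev extendingCover : SimpleGraph (V × W) :=
  G.voltageCover (fiberSwap G' φ) (fiberSwap_involutive hφ)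

noncomputable def liftSubgraph : (extendingCover φ hφ).Subgraph where
  verts := {x | φ x.2 = x.1}
  Adj x y := φ x.2 = x.1 ∧ φ y.2 = y.1 ∧ G'.Adj x.2 y.2
  adj_sub := by
    rintro ⟨u, a⟩ ⟨v, b⟩ ⟨hu, hv, hab⟩
    obtain rfl : φ a = u := hu
    obtain rfl : φ b = v := hv
    exact ⟨φ.map_adj hab, fiberSwap_of_adj hφ hab⟩
  edge_vert h := h.1
  symm := ⟨fun _ _ ⟨hx, hy, h⟩ => ⟨hy, hx, h.symm⟩⟩

theorem isCovering_liftSubgraph :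
    IsCovering (liftSubgraph φ hφ).coe G' (fun x => x.1.2) := by
  refine ⟨fun a => ⟨⟨(φ a, a), rfl⟩, rfl⟩, fun x => ⟨fun y hy => hy.2.2, ?_, ?_⟩⟩
  · rintro ⟨⟨u, a⟩, hu⟩ - ⟨⟨v, b⟩, hv⟩ - (rfl : a = b)
    exact Subtype.ext (Prod.ext (hu.symm.trans hv) rfl)
  · exact fun b hb => ⟨⟨(φ b, b), rfl⟩, ⟨x.2, rfl, hb⟩, rfl⟩

end Lift

end SimpleGraph

open SimpleGraph

def IsCovering.toHom {V W : Type} {G : SimpleGraph V} {H : G.Subgraph} {H' : SimpleGraph W}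
    {p : W → H.verts} (hp : IsCovering H' H.coe p) : H' →g G where
  toFun a := p a
  map_rel' h := H.adj_sub ((hp.2 _).mapsTo h)

lemma IsCovering.injOn_toHom {V W : Type} {G : SimpleGraph V} {H : G.Subgraph}
    {H' : SimpleGraph W} {p : W → H.verts} (hp : IsCovering H' H.coe p) (a : W) :
    Set.InjOn hp.toHom (H'.neighborSet a) :=
  fun _ hb _ hc hbc => (hp.2 a).injOn hb hc (Subtype.ext hbc)

lemma isCovering_id {V : Type} (G : SimpleGraph V) : IsCovering G G id :=
  ⟨Function.surjective_id, fun _ => Set.bijOn_id _⟩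

/-- Any finite covering `p : H' → H` of a subgraph `H ⊆ G` fits into finite
coverings `q : H̄ → H'` and `r : Ḡ → G` with `H̄` a subgraph of `Ḡ` and `r` restricted to `H̄`
equal to `p ∘ q`. -/
theorem statement_9 {V W : Type} [Fintype V] [Fintype W] (G : SimpleGraph V)
    (H : G.Subgraph) (H' : SimpleGraph W) (p : W → H.verts)
    (hp : IsCovering H' H.coe p) :
    ∃ (U : Type) (_ : Fintype U) (Gbar : SimpleGraph U) (r : U → V)
      (Hbar : Gbar.Subgraph) (q : Hbar.verts → W),
      IsCovering Gbar G r ∧ IsCovering Hbar.coe H' q ∧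
      ∀ x : Hbar.verts, r ↑x = ↑(p (q x)) := by
  cases isEmpty_or_nonempty W with
  | inl _ =>
    refine ⟨V, inferInstance, G, id, ⊥, fun x => x.2.elim, isCovering_id G, ?_, fun x => x.2.elim⟩
    exact ⟨fun a => isEmptyElim a, fun x => x.2.elim⟩
  | inr _ =>
    exact ⟨V × W, inferInstance, _, Prod.fst, liftSubgraph hp.toHom hp.injOn_toHom,
      fun x => x.1.2, isCovering_voltageCover _,
      isCovering_liftSubgraph hp.toHom hp.injOn_toHom, fun x => x.2.symm⟩
end

section
/- Let d ≥ 2 and assume that for every finite (d−1)-regular graph H with two legal edge colorings b₁, b₂ there exists a finite graph covering p : H̄ → H such that b₁∘p and b₂∘p are edge Kempe equivalent. Let G be a finite d-regular graph with two legal edge colorings c₁ and c₂ such that the spanning subgraphs (G,c₁)[d] and (G,c₂)[d] of edges colored d coincide. Then there exists a finite graph covering p : Ḡ → G such that (Ḡ, c₁∘p) and (Ḡ, c₂∘p) are edge Kempe equivalent. -/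
/-!
The edges of color `d` form a perfect matching `m`, the same for `c₁` and `c₂`. Deleting it
leaves a `(d-1)`-regular graph `H` on which both colorings are legal, so the hypothesis gives a
finite covering `H̄ → H` along which they become Kempe equivalent. Stacking copies of the
components of `H̄` makes all fibers equal in size, so that the fibers can be identified with
`Fin N`; then `m` lifts to a fixed-point-free involution `μ` and adding the edges `x — μ x` to `H̄`
gives a covering `Ḡ → G`.

A Kempe chain on `H̄` may pass through color `d` (or any other color), so it is not directly a
chain on `Ḡ`. Instead both pulled-back colorings are first moved, by Kempe switches into unused
colors, to colorings in which `H̄` carries the colors `d + 2, …, 2d` and the matching keeps `d`;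
shifted by `d + 1`, the chain on `H̄` never meets the matching color.
-/

open Function SimpleGraph

open scoped Classical

section KempeSwitch

variable {V : Type}

lemma kempeSwitch_apply (i j : ℕ) (γ : Set (Sym2 V)) (c : Sym2 V → ℕ) (e : Sym2 V) :
    kempeSwitch i j γ c e = if e ∈ γ then Equiv.swap i j (c e) else c e := by
  simp only [kempeSwitch, Equiv.swap_apply_def]

lemma kempeSwitch_empty (i j : ℕ) (c : Sym2 V → ℕ) : kempeSwitch i j ∅ c = c := by
  funext e
  simp [kempeSwitch_apply]

lemma kempeSwitch_kempeSwitch (i j : ℕ) (γ : Set (Sym2 V)) (c : Sym2 V → ℕ) :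
    kempeSwitch i j γ (kempeSwitch i j γ c) = c := by
  funext e
  by_cases he : e ∈ γ <;> simp [kempeSwitch_apply, he]

lemma kempeSwitch_union {γ δ : Set (Sym2 V)} (h : Disjoint γ δ) (i j : ℕ) (c : Sym2 V → ℕ) :
    kempeSwitch i j (γ ∪ δ) c = kempeSwitch i j γ (kempeSwitch i j δ c) := by
  funext e
  by_cases hγ : e ∈ γ
  · simp [kempeSwitch_apply, hγ, Set.disjoint_left.mp h hγ]
  · simp [kempeSwitch_apply, hγ]

lemma kempeSwitch_comp {W : Type} (i j : ℕ) (γ : Set (Sym2 V)) (c : Sym2 V → ℕ)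
    (f : Sym2 W → Sym2 V) : kempeSwitch i j γ c ∘ f = kempeSwitch i j (f ⁻¹' γ) (c ∘ f) :=
  rfl

lemma biSub_adj (G : SimpleGraph V) (c : Sym2 V → ℕ) (i j : ℕ) {u v : V} :
    (biSub G c i j).Adj u v ↔ G.Adj u v ∧ (c s(u, v) = i ∨ c s(u, v) = j) := by
  simp only [biSub, colorEdges, fromEdgeSet_adj, Set.mem_union, Set.mem_ofPred_eq, mem_edgeSet]
  constructor
  · rintro ⟨⟨h, hc⟩ | ⟨h, hc⟩, -⟩ <;> tauto
  · rintro ⟨h, hc⟩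
    exact ⟨hc.imp (⟨h, ·⟩) (⟨h, ·⟩), h.ne⟩

lemma biSub_congr (G : SimpleGraph V) {c c' : Sym2 V → ℕ} (i j : ℕ)
    (h : ∀ e ∈ G.edgeSet, (c' e = i ∨ c' e = j) ↔ (c e = i ∨ c e = j)) :
    biSub G c' i j = biSub G c i j := by
  ext u v
  simp only [biSub_adj]
  exact and_congr_right fun huv => h _ huv

lemma biSub_kempeSwitch (G : SimpleGraph V) (i j : ℕ) (γ : Set (Sym2 V)) (c : Sym2 V → ℕ) :
    biSub G (kempeSwitch i j γ c) i j = biSub G c i j := by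
  refine biSub_congr G i j fun e _ => ?_
  rw [kempeSwitch_apply]
  split_ifs
  · rw [Equiv.swap_apply_def]
    split_ifs <;> simp_all [eq_comm]
  · rfl

lemma mem_biSub_edgeSet (G : SimpleGraph V) (c : Sym2 V → ℕ) (i j : ℕ) {e : Sym2 V} :
    e ∈ (biSub G c i j).edgeSet ↔ e ∈ G.edgeSet ∧ (c e = i ∨ c e = j) := by
  induction e using Sym2.ind
  exact biSub_adj G c i j

lemma edgeEqOn_kempeSwitch {G : SimpleGraph V} {γ δ : Set (Sym2 V)}
    (h : ∀ e ∈ G.edgeSet, e ∈ γ ↔ e ∈ δ) (i j : ℕ) (c : Sym2 V → ℕ) :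
    EdgeEqOn G (kempeSwitch i j γ c) (kempeSwitch i j δ c) := fun e he => by
  simp only [kempeSwitch_apply, h e he]

end KempeSwitch

namespace KempeEquiv

variable {V : Type} {G : SimpleGraph V} {a b c : Sym2 V → ℕ}

@[refl]
lemma refl (a : Sym2 V → ℕ) : KempeEquiv G a a := Relation.ReflTransGen.refl

lemma trans (h₁ : KempeEquiv G a b) (h₂ : KempeEquiv G b c) : KempeEquiv G a c :=
  Relation.ReflTransGen.trans h₁ h₂

lemma of_edgeEqOn (h : EdgeEqOn G a b) : KempeEquiv G a b :=
  Relation.ReflTransGen.single (Or.inl h)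

lemma symm (h : KempeEquiv G a b) : KempeEquiv G b a := by
  induction h with
  | refl => rfl
  | @tail b c _ hbc ih =>
    refine trans (Relation.ReflTransGen.single ?_) ih
    rcases hbc with hbc | ⟨i, j, γ, ⟨hij, hγ, K, rfl⟩, rfl⟩
    · exact Or.inl fun e he => (hbc e he).symm
    · refine Or.inr ⟨i, j, _, ⟨hij, hγ, ?_⟩, (kempeSwitch_kempeSwitch i j _ b).symm⟩
      rw [biSub_kempeSwitch]
      exact ⟨K, rfl⟩

lemma map_of_le {Gs Gb : SimpleGraph V} (hle : Gs ≤ Gb) {σ : ℕ → ℕ} (hσ : Injective σ)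
    {m : ℕ} (hm : ∀ k, σ k ≠ m) (h : KempeEquiv Gs a b) :
    KempeEquiv Gb (fun e => if e ∈ Gs.edgeSet then σ (a e) else m)
      (fun e => if e ∈ Gs.edgeSet then σ (b e) else m) := by
  induction h with
  | refl => rfl
  | @tail b c _ hbc ih =>
    refine ih.trans (Relation.ReflTransGen.single ?_)
    rcases hbc with hbc | ⟨i, j, γ, ⟨hij, hγ, K, rfl⟩, rfl⟩
    · refine Or.inl fun e _ => ?_
      by_cases he : e ∈ Gs.edgeSet <;> simp [he, hbc e]
    · have hbiSub : biSub Gb (fun e => if e ∈ Gs.edgeSet then σ (b e) else m) (σ i) (σ j) =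
          biSub Gs b i j := by
        ext u v
        by_cases huv : Gs.Adj u v
        · simp [biSub_adj, huv, hle huv, hσ.eq_iff]
        · simp [biSub_adj, huv, Ne.symm (hm _)]
      refine Or.inr ⟨σ i, σ j, _, ⟨hσ.ne hij, hγ, by rw [hbiSub]; exact ⟨K, rfl⟩⟩,
        funext fun e => ?_⟩
      by_cases he : e ∈ {e | e ∈ (biSub Gs b i j).edgeSet ∧
          ∀ v ∈ e, (biSub Gs b i j).connectedComponentMk v = K}
      · have heGs : e ∈ Gs.edgeSet := ((mem_biSub_edgeSet Gs b i j).mp he.1).1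
        simp only [kempeSwitch_apply, if_pos he, if_pos heGs, hσ.swap_apply]
      · simp only [kempeSwitch_apply, if_neg he]

/-- `hΓ` keeps the type of components independent of the coloring being switched. -/
lemma kempeSwitch_component {i j : ℕ} (hij : i ≠ j) {Γ : SimpleGraph V}
    (hΓ : biSub G a i j = Γ) (K : Γ.ConnectedComponent) :
    KempeEquiv G a
      (kempeSwitch i j {e | e ∈ Γ.edgeSet ∧ ∀ v ∈ e, Γ.connectedComponentMk v = K} a) := by
  subst hΓ
  rcases Set.eq_empty_or_nonempty
    {e | e ∈ (biSub G a i j).edgeSet ∧ ∀ v ∈ e, (biSub G a i j).connectedComponentMk v = K}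
    with hγ | hγ
  · rw [hγ, kempeSwitch_empty]
  · exact Relation.ReflTransGen.single (Or.inr ⟨i, j, _, ⟨hij, hγ, K, rfl⟩, rfl⟩)

section Finite

variable [Finite V]

lemma kempeSwitch_components {i j : ℕ} (hij : i ≠ j) {Γ : SimpleGraph V}
    (hΓ : biSub G a i j = Γ) (S : Set Γ.ConnectedComponent) :
    KempeEquiv G a
      (kempeSwitch i j {e | e ∈ Γ.edgeSet ∧ ∀ v ∈ e, Γ.connectedComponentMk v ∈ S} a) := by
  induction S, S.toFinite using Set.Finite.induction_on with
  | empty =>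
    have hempty : {e | e ∈ Γ.edgeSet ∧
        ∀ v ∈ e, Γ.connectedComponentMk v ∈ (∅ : Set Γ.ConnectedComponent)} = ∅ :=
      Set.eq_empty_of_forall_notMem fun e ⟨_, he⟩ => he _ e.out_fst_mem
    rw [hempty, kempeSwitch_empty]
  | @insert K S hK _ ih =>
    have hsplit : {e | e ∈ Γ.edgeSet ∧ ∀ v ∈ e, Γ.connectedComponentMk v ∈ insert K S} =
        {e | e ∈ Γ.edgeSet ∧ ∀ v ∈ e, Γ.connectedComponentMk v = K} ∪
          {e | e ∈ Γ.edgeSet ∧ ∀ v ∈ e, Γ.connectedComponentMk v ∈ S} := by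
      ext e
      induction e using Sym2.ind with | _ x y => ?_
      by_cases h : Γ.Adj x y
      · simp [h, ConnectedComponent.connectedComponentMk_eq_of_adj h]
      · simp [h]
    have hdisj : Disjoint {e | e ∈ Γ.edgeSet ∧ ∀ v ∈ e, Γ.connectedComponentMk v = K}
        {e | e ∈ Γ.edgeSet ∧ ∀ v ∈ e, Γ.connectedComponentMk v ∈ S} :=
      Set.disjoint_left.mpr fun e ⟨_, heK⟩ ⟨_, heS⟩ =>
        hK (heK _ e.out_fst_mem ▸ heS _ e.out_fst_mem)
    rw [hsplit, kempeSwitch_union hdisj]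
    exact ih.trans (kempeSwitch_component hij ((biSub_kempeSwitch G i j _ a).trans hΓ) K)

lemma recolor {i j : ℕ} (hij : i ≠ j) (hj : ∀ e ∈ G.edgeSet, a e ≠ j) :
    KempeEquiv G a (fun e => if a e = i then j else a e) := by
  refine (kempeSwitch_components hij rfl Set.univ).trans (of_edgeEqOn fun e he => ?_)
  have := hj e he
  by_cases hi : a e = i <;>
    simp [kempeSwitch_apply, mem_biSub_edgeSet, he, hi, this]

lemma shift_lt {d : ℕ} (hb : ∀ e ∈ G.edgeSet, b e ≤ d) {k : ℕ} (hk : k ≤ d) :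
    KempeEquiv G b (fun e => if b e < k then b e + (d + 1) else b e) := by
  induction k with
  | zero => simpa using refl b
  | succ k ih =>
    refine (ih (by omega)).trans
      ((recolor (i := k) (j := k + (d + 1)) (by omega) fun e he => ?_).trans
        (of_edgeEqOn fun e he => ?_))
    · have := hb e he
      split_ifs <;> omega
    · have := hb e he
      split_ifs <;> omega

lemma shift {Gs : SimpleGraph V} {d : ℕ} (hb : ∀ e ∈ G.edgeSet, b e ≤ d)
    (hs : ∀ e ∈ G.edgeSet, e ∈ Gs.edgeSet ↔ b e ≠ d) :
    KempeEquiv G b (fun e => if e ∈ Gs.edgeSet then b e + (d + 1) else d) := by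
  refine (shift_lt hb le_rfl).trans (of_edgeEqOn fun e he => ?_)
  have := hb e he
  simp only [hs e he]
  split_ifs <;> omega

lemma of_deleteEdges_colorEdges {d : ℕ} (ha : ∀ e ∈ G.edgeSet, a e ≤ d)
    (hb : ∀ e ∈ G.edgeSet, b e ≤ d) (hab : colorEdges G a d = colorEdges G b d)
    (h : KempeEquiv (G.deleteEdges (colorEdges G a d)) a b) : KempeEquiv G a b := by
  have hs : ∀ c : Sym2 V → ℕ, colorEdges G c d = colorEdges G a d → ∀ e ∈ G.edgeSet,
      e ∈ (G.deleteEdges (colorEdges G a d)).edgeSet ↔ c e ≠ d := fun c hc e he => by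
    rw [edgeSet_deleteEdges, ← hc]
    simp [colorEdges, he]
  exact (shift ha (hs a rfl)).trans ((h.map_of_le (G.deleteEdges_le _)
    (add_left_injective (d + 1)) fun k => by omega).trans (shift hb (hs b hab.symm)).symm)

end Finite

lemma comap {W : Type} [Finite W] {G' : SimpleGraph W} {r : W → V}
    (hr : ∀ ⦃u v⦄, G'.Adj u v → G.Adj (r u) (r v)) (h : KempeEquiv G a b) :
    KempeEquiv G' (a ∘ Sym2.map r) (b ∘ Sym2.map r) := by
  have hedge : ∀ e ∈ G'.edgeSet, Sym2.map r e ∈ G.edgeSet := fun e he => by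
    induction e using Sym2.ind
    exact hr he
  induction h with
  | refl => rfl
  | @tail b c _ hbc ih =>
    refine ih.trans ?_
    rcases hbc with hbc | ⟨i, j, γ, ⟨hij, -, K, rfl⟩, rfl⟩
    · exact of_edgeEqOn fun e he => hbc _ (hedge e he)
    · let φ : biSub G' (b ∘ Sym2.map r) i j →g biSub G b i j :=
        ⟨r, fun huv => by
          rw [biSub_adj] at huv ⊢
          exact ⟨hr huv.1, huv.2⟩⟩
      refine (kempeSwitch_components hij rfl {K' | K'.map φ = K}).trans
        (of_edgeEqOn ?_)
      rw [kempeSwitch_comp]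
      refine edgeEqOn_kempeSwitch (fun e he => ?_) i j _
      induction e using Sym2.ind with | _ x y => ?_
      have hxy : G'.Adj x y := he
      simp [biSub_adj, hxy, hr hxy, ConnectedComponent.map_mk, φ]

end KempeEquiv

lemma neighborSet_fromRel_eq_of_involutive {X : Type} {μ : X → X} (hμ : Involutive μ) {x : X}
    (hx : μ x ≠ x) : (fromRel fun x y => y = μ x).neighborSet x = {μ x} := by
  ext y
  simp only [mem_neighborSet, fromRel_adj, Set.mem_singleton_iff, ← hμ.eq_iff (x := x)]
  constructor
  · rintro ⟨-, h | h⟩ <;> simp [h]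
  · rintro rfl
    exact ⟨hx.symm, Or.inl rfl⟩

def SimpleGraph.layers {W : Type} (H : SimpleGraph W) (κ : W → ℕ) :
    SimpleGraph (Σ x, Fin (κ x)) where
  Adj a b := H.Adj a.1 b.1 ∧ (a.2 : ℕ) = b.2
  symm := ⟨fun _ _ h => ⟨h.1.symm, h.2.symm⟩⟩
  loopless := ⟨fun _ h => H.irrefl h.1⟩

lemma SimpleGraph.layers_adj {W : Type} (H : SimpleGraph W) (κ : W → ℕ)
    {a b : Σ x, Fin (κ x)} : (H.layers κ).Adj a b ↔ H.Adj a.1 b.1 ∧ (a.2 : ℕ) = b.2 :=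
  Iff.rfl

lemma isCovering_layers {W : Type} (H : SimpleGraph W) {κ : W → ℕ} (hκ : ∀ x, 0 < κ x)
    (hadj : ∀ ⦃x y⦄, H.Adj x y → κ x = κ y) : IsCovering (H.layers κ) H Sigma.fst := by
  refine ⟨fun x => ⟨⟨x, ⟨0, hκ x⟩⟩, rfl⟩, fun a => ⟨fun _ h => ((H.layers_adj κ).mp h).1, ?_,
    fun y hy => ⟨⟨y, ⟨a.2, hadj hy ▸ a.2.isLt⟩⟩, (H.layers_adj κ).mpr ⟨hy, rfl⟩, rfl⟩⟩⟩
  rintro ⟨y₁, k₁⟩ h₁ ⟨y₂, k₂⟩ h₂ (rfl : y₁ = y₂)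
  obtain rfl : k₁ = k₂ :=
    Fin.ext (((H.layers_adj κ).mp h₁).2.symm.trans ((H.layers_adj κ).mp h₂).2)
  rfl

namespace IsCovering

variable {V W X : Type} {G : SimpleGraph V} {H : SimpleGraph W} {q : W → V}

lemma adj (hq : IsCovering H G q) {x y : W} (h : H.Adj x y) : G.Adj (q x) (q y) :=
  (hq.2 x).1 h

lemma comp {K : SimpleGraph X} {r : X → W} (hr : IsCovering K H r) (hq : IsCovering H G q) :
    IsCovering K G (q ∘ r) :=
  ⟨hq.1.comp hr.1, fun x => (hq.2 (r x)).comp (hr.2 x)⟩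

lemma card_fiber_le_of_adj [Finite W] (hq : IsCovering H G q) {v w : V} (h : G.Adj v w) :
    Nat.card {x // q x = v} ≤ Nat.card {x // q x = w} := by
  have hlift : ∀ x : {x // q x = v}, ∃ y : {y // q y = w}, H.Adj x y := fun ⟨x, hx⟩ => by
    obtain ⟨y, hxy, hy⟩ := (hq.2 x).2.2 (show G.Adj (q x) w from hx ▸ h)
    exact ⟨⟨y, hy⟩, hxy⟩
  choose f hf using hlift
  refine Nat.card_le_card_of_injective f fun x₁ x₂ hx => Subtype.ext ?_
  exact (hq.2 (f x₁)).2.1 (hf x₁).symm (hx ▸ (hf x₂).symm) (x₁.2.trans x₂.2.symm)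

lemma card_fiber_eq_of_adj [Finite W] (hq : IsCovering H G q) {v w : V} (h : G.Adj v w) :
    Nat.card {x // q x = v} = Nat.card {x // q x = w} :=
  (hq.card_fiber_le_of_adj h).antisymm (hq.card_fiber_le_of_adj h.symm)

lemma map_mem_edgeSet (hq : IsCovering H G q) {e : Sym2 W} (he : e ∈ H.edgeSet) :
    Sym2.map q e ∈ G.edgeSet := by
  induction e using Sym2.ind
  exact hq.adj he

lemma colorEdges_comp (hq : IsCovering H G q) (c : Sym2 V → ℕ) (k : ℕ) :
    colorEdges H (c ∘ Sym2.map q) k = H.edgeSet ∩ Sym2.map q ⁻¹' colorEdges G c k := by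
  ext e
  exact ⟨fun ⟨he, hc⟩ => ⟨he, hq.map_mem_edgeSet he, hc⟩, fun ⟨he, _, hc⟩ => ⟨he, hc⟩⟩

lemma sup_fromRel {K : SimpleGraph X} {p : X → W} (hp : IsCovering K H p) {m : W → W}
    {μ : X → X} (hm : Involutive m) (hμ : Involutive μ)
    (hpμ : ∀ x, p (μ x) = m (p x)) (hmv : ∀ v, m v ≠ v) (hmH : ∀ v, ¬ H.Adj v (m v)) :
    IsCovering (K ⊔ fromRel fun x y => y = μ x) (H ⊔ fromRel fun u v => v = m u) p := by
  refine ⟨hp.1, fun x => ?_⟩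
  have hμx : μ x ≠ x := fun h => hmv (p x) (by rw [← hpμ, h])
  rw [neighborSet_sup, neighborSet_sup, neighborSet_fromRel_eq_of_involutive hμ hμx,
    neighborSet_fromRel_eq_of_involutive hm (hmv _), Set.union_singleton, Set.union_singleton,
    ← hpμ]
  exact (hp.2 x).insert (by rw [hpμ]; exact hmH _)

/-- Take `N / n` layers over a fiber of size `n`, where `N = |W|!` is a multiple of every fiber
size. -/
lemma exists_card_fiber_eq [Fintype W] (hq : IsCovering H G q) :
    ∃ (X : Type) (_ : Fintype X) (K : SimpleGraph X) (r : X → W) (N : ℕ),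
      IsCovering K H r ∧ ∀ v, Nat.card {x // q (r x) = v} = N := by
  let n : V → ℕ := fun v => Nat.card {x // q x = v}
  let N := (Nat.card W).factorial
  have hn : ∀ x, 0 < n (q x) := fun x =>
    have : Nonempty {y // q y = q x} := ⟨⟨x, rfl⟩⟩
    Nat.card_pos
  have hdvd : ∀ x, n (q x) ∣ N := fun x => Nat.dvd_factorial (hn x) (Finite.card_subtype_le _)
  have hpos : ∀ x, 0 < N / n (q x) := fun x =>
    Nat.div_pos (Nat.le_of_dvd (Nat.factorial_pos _) (hdvd x)) (hn x)
  have hconst : ∀ ⦃x y⦄, H.Adj x y → N / n (q x) = N / n (q y) := fun x y h =>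
    congrArg (N / ·) (hq.card_fiber_eq_of_adj (hq.adj h))
  refine ⟨_, inferInstance, H.layers fun x => N / n (q x), Sigma.fst, N,
    isCovering_layers H hpos hconst, fun v => ?_⟩
  obtain ⟨x, rfl⟩ := hq.1 v
  rw [Nat.card_congr (Equiv.subtypeSigmaEquiv _ fun y => q y = q x), Nat.card_sigma]
  calc ∑ y : {y // q y = q x}, Nat.card (Fin (N / n (q y.1)))
      = ∑ _y : {y // q y = q x}, N / n (q x) :=
        Finset.sum_congr rfl fun y _ => by rw [Nat.card_eq_fintype_card, Fintype.card_fin, y.2]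
    _ = N := by
        rw [Finset.sum_const, Finset.card_univ, ← Nat.card_eq_fintype_card, smul_eq_mul]
        exact Nat.mul_div_cancel' (hdvd x)

end IsCovering

lemma exists_involutive_lift {V X : Type} [Finite X] {p : X → V} {N : ℕ}
    (hN : ∀ v, Nat.card {x // p x = v} = N) {m : V → V} (hm : Involutive m) :
    ∃ μ : X → X, Involutive μ ∧ ∀ x, p (μ x) = m (p x) := by
  let E : X ≃ V × Fin N := (Equiv.sigmaFiberEquiv p).symm.trans
    ((Equiv.sigmaCongrRight fun v => Finite.equivFinOfCardEq (hN v)).trans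
      (Equiv.sigmaEquivProd V (Fin N)))
  refine ⟨E.symm ∘ Prod.map m id ∘ E, fun x => by simp [Prod.map_map, hm.comp_self], fun x => ?_⟩
  show (E (E.symm _)).1 = _
  rw [E.apply_symm_apply]
  rfl

section Coloring

variable {V : Type} {G : SimpleGraph V} {c : Sym2 V → ℕ} {d k : ℕ}

/-- The `d` colors around a vertex are distinct, so each of them occurs exactly once. -/
lemma IsLegal.existsUnique_adj_color (hc : IsLegal G d c) (hreg : RegularDeg G d) (v : V)
    (hk : k ∈ Finset.Icc 1 d) : ∃! w, G.Adj v w ∧ c s(v, w) = k := by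
  have hinj : Set.InjOn (fun w => c s(v, w)) (G.neighborSet v) := fun w₁ h₁ w₂ h₂ h =>
    by_contra fun hne => hc.2 h₁ h₂ hne h
  have himage : (fun w => c s(v, w)) '' G.neighborSet v = ↑(Finset.Icc 1 d) := by
    refine Set.eq_of_subset_of_ncard_le ?_ ?_ (Finset.finite_toSet _)
    · rintro _ ⟨w, hw, rfl⟩
      exact hc.1 _ hw
    · rw [hinj.ncard_image, hreg v, Set.ncard_coe_finset, Nat.card_Icc]
      omega
  obtain ⟨w, hw, hwk⟩ : k ∈ (fun w => c s(v, w)) '' G.neighborSet v := by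
    rw [himage]
    exact hk
  exact ⟨w, ⟨hw, hwk⟩, fun w' ⟨hw', hw'k⟩ => hinj hw' hw (hw'k.trans hwk.symm)⟩

lemma IsLegal.exists_involutive_partner (hc : IsLegal G d c) (hreg : RegularDeg G d)
    (hk : k ∈ Finset.Icc 1 d) :
    ∃ m : V → V, Involutive m ∧ ∀ v w, G.Adj v w ∧ c s(v, w) = k ↔ w = m v := by
  choose m hm using fun v => hc.existsUnique_adj_color hreg v hk
  have hmG : ∀ v w, G.Adj v w ∧ c s(v, w) = k ↔ w = m v :=
    fun v w => ⟨(hm v).2 w, fun h => h ▸ (hm v).1⟩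
  refine ⟨m, fun v => ((hmG _ _).mp ⟨(hm v).1.1.symm, ?_⟩).symm, hmG⟩
  rw [Sym2.eq_swap]
  exact (hm v).1.2

lemma RegularDeg.deleteEdges_colorEdges (hreg : RegularDeg G d) (hc : IsLegal G d c)
    (hd : 1 ≤ d) : RegularDeg (G.deleteEdges (colorEdges G c d)) (d - 1) := fun v => by
  obtain ⟨w, ⟨hvw, hw⟩, huniq⟩ := hc.existsUnique_adj_color hreg v (k := d) (by simp [hd])
  have hnbr : (G.deleteEdges (colorEdges G c d)).neighborSet v = G.neighborSet v \ {w} := by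
    ext u
    simp only [mem_neighborSet, deleteEdges_adj, colorEdges, Set.mem_ofPred_eq, mem_edgeSet,
      Set.mem_sdiff, Set.mem_singleton_iff]
    exact and_congr_right fun hvu => ⟨fun h hu => h ⟨hvu, hu ▸ hw⟩, fun h hu => h (huniq u hu)⟩
  rw [hnbr, Set.ncard_sdiff_singleton_of_mem (show w ∈ G.neighborSet v from hvw), hreg v]

lemma IsLegal.deleteEdges_colorEdges (hc : IsLegal G d c) :
    IsLegal (G.deleteEdges (colorEdges G c d)) (d - 1) c := by
  refine ⟨fun e he => ?_, fun u v w huv huw hvw => hc.2 huv.1 huw.1 hvw⟩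
  rw [edgeSet_deleteEdges] at he
  have := Finset.mem_Icc.mp (hc.1 e he.1)
  have hne : c e ≠ d := fun h => he.2 ⟨he.1, h⟩
  exact Finset.mem_Icc.mpr ⟨this.1, by omega⟩

variable {m : V → V}

lemma eq_deleteEdges_colorEdges_sup_fromRel (hmG : ∀ v w, G.Adj v w ∧ c s(v, w) = k ↔ w = m v) :
    G = G.deleteEdges (colorEdges G c k) ⊔ fromRel fun u v => v = m u := by
  ext u v
  simp only [sup_adj, deleteEdges_adj, fromRel_adj, colorEdges, Set.mem_ofPred_eq, mem_edgeSet]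
  constructor
  · intro h
    by_cases hc : c s(u, v) = k
    · exact Or.inr ⟨h.ne, Or.inl ((hmG u v).mp ⟨h, hc⟩)⟩
    · exact Or.inl ⟨h, fun h' => hc h'.2⟩
  · rintro (⟨h, -⟩ | ⟨-, rfl | rfl⟩)
    exacts [h, ((hmG _ _).mpr rfl).1, ((hmG _ _).mpr rfl).1.symm]

lemma IsCovering.sup_fromRel_of_partner {X : Type} {K : SimpleGraph X} {p : X → V}
    {μ : X → X} (hp : IsCovering K (G.deleteEdges (colorEdges G c k)) p)
    (hmG : ∀ v w, G.Adj v w ∧ c s(v, w) = k ↔ w = m v) (hm : Involutive m) (hμ : Involutive μ)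
    (hpμ : ∀ x, p (μ x) = m (p x)) : IsCovering (K ⊔ fromRel fun x y => y = μ x) G p := by
  rw [eq_deleteEdges_colorEdges_sup_fromRel hmG]
  refine hp.sup_fromRel hm hμ hpμ (fun v => ((hmG v _).mpr rfl).1.ne.symm) fun v h => ?_
  rw [deleteEdges_adj] at h
  exact h.2 ((hmG v _).mpr rfl)

lemma deleteEdges_colorEdges_sup_fromRel {X : Type} {K : SimpleGraph X} {p : X → V}
    {μ : X → X} (hK : ∀ ⦃x y⦄, K.Adj x y → (G.deleteEdges (colorEdges G c k)).Adj (p x) (p y))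
    (hmG : ∀ v w, G.Adj v w ∧ c s(v, w) = k ↔ w = m v) (hpμ : ∀ x, p (μ x) = m (p x)) :
    (K ⊔ fromRel fun x y => y = μ x).deleteEdges
      (colorEdges (K ⊔ fromRel fun x y => y = μ x) (c ∘ Sym2.map p) k) = K := by
  have hμ : ∀ x, c s(p x, p (μ x)) = k := fun x => by
    rw [hpμ]
    exact ((hmG _ _).mpr rfl).2
  ext x y
  simp only [deleteEdges_adj, sup_adj, fromRel_adj, colorEdges, Set.mem_ofPred_eq, mem_edgeSet,
    comp_apply, Sym2.map_mk]
  constructor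
  · rintro ⟨hxy, hne⟩
    by_contra hK'
    refine hne ⟨hxy, ?_⟩
    rcases hxy with h | ⟨-, rfl | rfl⟩
    exacts [absurd h hK', hμ x, Sym2.eq_swap ▸ hμ y]
  · intro h
    have hpxy := hK h
    rw [deleteEdges_adj] at hpxy
    exact ⟨Or.inl h, fun ⟨_, hc⟩ => hpxy.2 ⟨hpxy.1, hc⟩⟩

end Coloring

/-- Assume the theorem holds for all finite `(d-1)`-regular graphs. If two legal
edge colorings `c₁, c₂` of a finite `d`-regular graph `G` color the very same edges by the
color `d`, then there is a finite covering `p : Ḡ → G` with `c₁∘p` and `c₂∘p` edge Kempe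
equivalent. -/
theorem statement_11 (d : ℕ) (hd : 2 ≤ d)
    (ih : ∀ (W : Type) (_ : Fintype W) (H : SimpleGraph W) (b₁ b₂ : Sym2 W → ℕ),
      RegularDeg H (d - 1) → IsLegal H (d - 1) b₁ → IsLegal H (d - 1) b₂ →
      ∃ (W' : Type) (_ : Fintype W') (H' : SimpleGraph W') (q : W' → W),
        IsCovering H' H q ∧ KempeEquiv H' (b₁ ∘ Sym2.map q) (b₂ ∘ Sym2.map q))
    {V : Type} [Fintype V] (G : SimpleGraph V) (c₁ c₂ : Sym2 V → ℕ)
    (hreg : RegularDeg G d) (h1 : IsLegal G d c₁) (h2 : IsLegal G d c₂)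
    (hsame : colorEdges G c₁ d = colorEdges G c₂ d) :
    ∃ (V' : Type) (_ : Fintype V') (G' : SimpleGraph V') (p : V' → V),
      IsCovering G' G p ∧ KempeEquiv G' (c₁ ∘ Sym2.map p) (c₂ ∘ Sym2.map p) := by
  obtain ⟨m, hm, hmG⟩ := h1.exists_involutive_partner hreg (k := d) (by simp; omega)
  obtain ⟨W, _, H₁, q, hq, hk⟩ := ih V inferInstance _ c₁ c₂
    (hreg.deleteEdges_colorEdges h1 (by omega)) h1.deleteEdges_colorEdges
    (hsame ▸ h2.deleteEdges_colorEdges)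
  obtain ⟨X, _, H₂, r, N, hr, hN⟩ := hq.exists_card_fiber_eq
  obtain ⟨μ, hμ, hpμ⟩ := exists_involutive_lift hN hm
  have hp := (hr.comp hq).sup_fromRel_of_partner hmG hm hμ hpμ
  refine ⟨X, inferInstance, _, q ∘ r, hp, ?_⟩
  have hk₂ : KempeEquiv H₂ (c₁ ∘ Sym2.map (q ∘ r)) (c₂ ∘ Sym2.map (q ∘ r)) := by
    simpa only [Sym2.map_comp, comp_assoc] using hk.comap fun _ _ h => hr.adj h
  refine .of_deleteEdges_colorEdges (d := d)
    (fun e he => (Finset.mem_Icc.mp (h1.1 _ (hp.map_mem_edgeSet he))).2)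
    (fun e he => (Finset.mem_Icc.mp (h2.1 _ (hp.map_mem_edgeSet he))).2)
    (by rw [hp.colorEdges_comp, hp.colorEdges_comp, hsame]) ?_
  rwa [deleteEdges_colorEdges_sup_fromRel (fun _ _ h => (hr.comp hq).adj h) hmG hpμ]
end
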